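/- arXiv:1709.02013 — 2 statements merged into one kernel-verified Lean document; each statement's English description precedes it below -/
import Mathlib

section
/- Every nonempty proper vertex subset X of the n-dimensional hypercube Q_n satisfies |X| + |N(X)| ≥ n + 1, where N(X) is the external neighborhood of X. -/
/-- The hypercube graph on `Fin n → Bool`: adjacency = Hamming distance 1. -/
def Qn (n : ℕ) : SimpleGraph (Fin n → Bool) where
  Adj x y := (Finset.univ.filter fun i => x i ≠ y i).card = 1
  symm := by
    constructor
    intro x y h
    convert h using 2
    ext i
    simp [ne_comm]
  loopless := by
    constructor
    intro x h
    simp at h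

/-- Bitwise complement. -/
def bcomp (n : ℕ) (x : Fin n → Bool) : Fin n → Bool := fun i => !(x i)

/-- Crossing-edge adjacency in HCN_n. -/
def CAdj (n : ℕ) (u v : (Fin n → Bool) × (Fin n → Bool)) : Prop :=
  (u.1 ≠ u.2 ∧ v = (u.2, u.1)) ∨
  (u.1 = u.2 ∧ v = (bcomp n u.1, bcomp n u.1)) ∨
  (v.1 ≠ v.2 ∧ u = (v.2, v.1)) ∨
  (v.1 = v.2 ∧ u = (bcomp n v.1, bcomp n v.1))

/-- The hierarchical cubic network HCN_n. -/
def HCN (n : ℕ) : SimpleGraph ((Fin n → Bool) × (Fin n → Bool)) where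
  Adj u v := u ≠ v ∧ ((u.1 = v.1 ∧ (Qn n).Adj u.2 v.2) ∨ CAdj n u v)
  symm := by
    constructor
    rintro u v ⟨hne, h⟩
    refine ⟨hne.symm, ?_⟩
    rcases h with ⟨h1, h2⟩ | h | h | h | h
    · exact Or.inl ⟨h1.symm, (Qn n).adj_symm h2⟩
    · exact Or.inr (Or.inr (Or.inr (Or.inl h)))
    · exact Or.inr (Or.inr (Or.inr (Or.inr h)))
    · exact Or.inr (Or.inl h)
    · exact Or.inr (Or.inr (Or.inl h))
  loopless := by constructor; intro u h; exact h.1 rfl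

/-!
A vertex `x ∈ X` has `n` neighbours in `Q_n`: at most `|X| - 1` of them lie in `X`, and the others
lie in `N(X)`.
-/

open Finset

namespace SimpleGraph

theorem degree_add_one_le_card_add_card_externalNeighbors {V : Type*} [Fintype V]
    [DecidableEq V] (G : SimpleGraph V) [DecidableRel G.Adj] (X : Finset V) {x : V} (hx : x ∈ X) :
    G.degree x + 1 ≤ #X + #(univ.filter fun y => y ∉ X ∧ ∃ x ∈ X, G.Adj x y) := by
  set N := univ.filter fun y => y ∉ X ∧ ∃ x ∈ X, G.Adj x y
  have hsub : G.neighborFinset x ⊆ X.erase x ∪ N := by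
    intro y hy
    rw [mem_neighborFinset] at hy
    by_cases hyX : y ∈ X
    · exact mem_union_left _ (mem_erase.2 ⟨hy.ne.symm, hyX⟩)
    · exact mem_union_right _ (mem_filter.2 ⟨mem_univ y, hyX, x, hx, hy⟩)
  have hX : 1 ≤ #X := card_pos.2 ⟨x, hx⟩
  calc G.degree x + 1 ≤ #(X.erase x ∪ N) + 1 := by
        rw [← card_neighborFinset_eq_degree]; gcongr
    _ ≤ #(X.erase x) + #N + 1 := by gcongr; exact card_union_le _ _
    _ = #X + #N := by rw [card_erase_of_mem hx]; omega

end SimpleGraph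

theorem Qn_adj_iff {n : ℕ} {x y : Fin n → Bool} :
    (Qn n).Adj x y ↔ ∃ i, y = Function.update x i (!x i) := by
  simp only [Qn, card_eq_one, Finset.ext_iff, mem_filter, mem_univ, true_and, mem_singleton]
  refine exists_congr fun i => ⟨fun h => funext fun j => ?_, fun h j => ?_⟩
  · specialize h j
    rw [Function.update_apply]
    revert h
    split_ifs with hji
    · subst hji
      cases x j <;> cases y j <;> simp
    · cases x j <;> cases y j <;> simp [hji]
  · subst h
    rw [Function.update_apply]
    split_ifs <;> simp_all

theorem Qn_degree (n : ℕ) (x : Fin n → Bool) [Fintype ((Qn n).neighborSet x)] :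
    (Qn n).degree x = n := by
  have hinj : Function.Injective fun i => Function.update x i (!x i) := by
    intro i j hij
    by_contra hne
    have := congrFun hij i
    simp [Function.update_of_ne hne] at this
  have hset : (Qn n).neighborSet x = Set.range fun i => Function.update x i (!x i) := by
    ext y
    simp [Qn_adj_iff, eq_comm]
  rw [← SimpleGraph.card_neighborSet_eq_degree, Fintype.card_congr (Equiv.setCongr hset),
    Set.card_range_of_injective hinj, Fintype.card_fin]

open scoped Classical in
theorem stmt2_general (n : ℕ) (X : Finset (Fin n → Bool)) (hX : X.Nonempty) :
    n + 1 ≤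
      X.card + (Finset.univ.filter
        (fun y => y ∉ X ∧ ∃ x ∈ X, (Qn n).Adj x y)).card := by
  obtain ⟨x, hx⟩ := hX
  have h := (Qn n).degree_add_one_le_card_add_card_externalNeighbors X hx
  rwa [Qn_degree] at h

open scoped Classical in
/-- Every nonempty proper vertex subset X of Q_n satisfies |X| + |N(X)| ≥ n + 1. -/
theorem stmt2 (n : ℕ) (X : Finset (Fin n → Bool)) (hX : X.Nonempty)
    (hXp : X ≠ Finset.univ) :
    n + 1 ≤
      X.card + (Finset.univ.filter
        (fun y => y ∉ X ∧ ∃ x ∈ X, (Qn n).Adj x y)).card :=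
  stmt2_general n X hX
end

section
/- Let n ≥ 2 and 0 ≤ h ≤ n−1. In HCN_n, fix x ∈ {0,1}^n and let X = {(x,y) : the last n−h coordinates of y are all 0}. Let S be the set of all vertices of HCN_n outside X adjacent to some vertex of X. Then |S| = 2^h·(n−h) + 2^h = 2^h·(n+1−h). -/
/-!
Since `X = {x} × T` lies in a single subcube, a neighbour of `X` outside `X` is either an internal
neighbour `(x, y)` with `y` on the vertex boundary of `T` in `Q_n`, or the crossing-edge neighbour
of a vertex of `X`. The latter have first coordinate `≠ x`, and they are pairwise distinct because
taking the crossing neighbour is an involution; hence `|S| = |∂T| + |T|`. Finally `∂T` consists of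
the vectors `t + eᵢ` with `t ∈ T` and `i ≥ h`, so `|∂T| = 2^h (n - h)`.
-/

open Finset Function

namespace SimpleGraph

variable {V : Type*} [Fintype V]

open scoped Classical in
noncomputable def vertexBoundary (G : SimpleGraph V) (s : Finset V) : Finset V :=
  {v | v ∉ s ∧ ∃ u ∈ s, G.Adj u v}

@[simp]
lemma mem_vertexBoundary {G : SimpleGraph V} {s : Finset V} {v : V} :
    v ∈ G.vertexBoundary s ↔ v ∉ s ∧ ∃ u ∈ s, G.Adj u v := by
  simp [vertexBoundary]

end SimpleGraph

open SimpleGraph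

variable {n : ℕ}

lemma bcomp_bcomp (x : Fin n → Bool) : bcomp n (bcomp n x) = x :=
  funext fun i => Bool.not_not (x i)

lemma bcomp_ne_self (hn : 0 < n) (x : Fin n → Bool) : bcomp n x ≠ x := fun hx => by
  simpa [bcomp] using congrFun hx ⟨0, hn⟩

lemma qn_adj_iff {a b : Fin n → Bool} : (Qn n).Adj a b ↔ ∃ i, b = update a i (!a i) := by
  simp only [Qn, card_eq_one, Finset.ext_iff, mem_filter, mem_univ, true_and, mem_singleton,
    funext_iff, update_apply]
  refine exists_congr fun i => forall_congr' fun j => ?_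
  by_cases hji : j = i
  · subst hji; cases a j <;> cases b j <;> simp
  · cases a j <;> cases b j <;> simp [hji]

lemma Fin.card_filter_le_val (h : ℕ) : #{i : Fin n | h ≤ (i : ℕ)} = n - h := by
  rcases lt_or_ge h n with hh | hh
  · rw [show ({i : Fin n | h ≤ (i : ℕ)} : Finset _) = Ici ⟨h, hh⟩ by ext; simp [Fin.le_def],
      Fin.card_Ici]
  · simp [filter_false_of_mem, fun i : Fin n => i.2.trans_le hh, Nat.sub_eq_zero_of_le hh]

section LowSubcube

variable {h : ℕ}

def lowSubcube (n h : ℕ) : Finset (Fin n → Bool) := {y | ∀ i : Fin n, h ≤ (i : ℕ) → y i = false}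

@[simp]
lemma mem_lowSubcube {y : Fin n → Bool} :
    y ∈ lowSubcube n h ↔ ∀ i : Fin n, h ≤ (i : ℕ) → y i = false := by
  simp [lowSubcube]

lemma update_mem_lowSubcube_iff {t : Fin n → Bool} (ht : t ∈ lowSubcube n h) {i : Fin n}
    {b : Bool} : update t i b ∈ lowSubcube n h ↔ (h ≤ (i : ℕ) → b = false) := by
  rw [mem_lowSubcube] at ht ⊢
  refine ⟨fun hu hi => by simpa using hu i hi, fun hb j hj => ?_⟩
  by_cases hji : j = i
  · subst hji; simpa using hb hj
  · simpa [hji] using ht j hj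

lemma card_lowSubcube (hh : h ≤ n) : #(lowSubcube n h) = 2 ^ h := by
  have : #(lowSubcube n h) = #(univ : Finset (Fin h → Bool)) := by
    refine card_nbij' (fun y j => y (Fin.castLE hh j))
      (fun g i => if hi : (i : ℕ) < h then g ⟨i, hi⟩ else false) (by simp) ?_ ?_ ?_
    · intro g _
      simpa using fun i hi hi' => absurd hi' (by omega)
    · intro y hy
      funext i
      by_cases hi : (i : ℕ) < h
      · simp [hi]
      · simpa [hi] using (mem_lowSubcube.mp hy i (by omega)).symm
    · intro g _
      funext j
      simp [j.2]
  simp [this]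

lemma qn_vertexBoundary_lowSubcube :
    (Qn n).vertexBoundary (lowSubcube n h) =
      (lowSubcube n h ×ˢ ({i | h ≤ (i : ℕ)} : Finset (Fin n))).image
        fun p => update p.1 p.2 true := by
  ext y
  simp only [mem_vertexBoundary, qn_adj_iff, mem_image, mem_product, mem_filter, mem_univ,
    true_and, Prod.exists]
  constructor
  · rintro ⟨hy, t, ht, i, rfl⟩
    have hi : h ≤ (i : ℕ) := by
      by_contra hi
      exact hy ((update_mem_lowSubcube_iff ht).mpr fun hi' => absurd hi' hi)
    exact ⟨t, i, ⟨ht, hi⟩, by rw [mem_lowSubcube.mp ht i hi]; rfl⟩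
  · rintro ⟨t, i, ⟨ht, hi⟩, rfl⟩
    refine ⟨by simpa [update_mem_lowSubcube_iff ht] using hi, t, ht, i, ?_⟩
    rw [mem_lowSubcube.mp ht i hi]; rfl

lemma injOn_update_true :
    Set.InjOn (fun p : (Fin n → Bool) × Fin n => update p.1 p.2 true)
      ↑(lowSubcube n h ×ˢ ({i | h ≤ (i : ℕ)} : Finset (Fin n))) := by
  rintro ⟨t, i⟩ hp ⟨t', i'⟩ hp' heq
  simp only [coe_product, coe_filter, Set.mem_prod, mem_coe, mem_univ, true_and,
    Set.mem_ofPred_eq] at hp hp' heq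
  obtain rfl : i = i' := by
    by_contra hii
    simpa [update_of_ne hii, mem_lowSubcube.mp hp'.1 i hp.2] using congrFun heq i
  have recover : ∀ s ∈ lowSubcube n h, update (update s i true) i false = s := fun s hs => by
    rw [update_idem, ← mem_lowSubcube.mp hs i hp.2, update_eq_self]
  calc (t, i) = (update (update t i true) i false, i) := by rw [recover t hp.1]
    _ = (t', i) := by rw [heq, recover t' hp'.1]

lemma card_qn_vertexBoundary_lowSubcube :
    #((Qn n).vertexBoundary (lowSubcube n h)) = #(lowSubcube n h) * (n - h) := by
  rw [qn_vertexBoundary_lowSubcube, card_image_of_injOn injOn_update_true, card_product,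
    Fin.card_filter_le_val]

end LowSubcube

def crossNeighbor (n : ℕ) (u : (Fin n → Bool) × (Fin n → Bool)) : (Fin n → Bool) × (Fin n → Bool) :=
  if u.1 = u.2 then (bcomp n u.1, bcomp n u.1) else (u.2, u.1)

lemma crossNeighbor_involutive : Involutive (crossNeighbor n) := by
  intro u
  unfold crossNeighbor
  split_ifs <;> simp_all [bcomp_bcomp, Prod.ext_iff, eq_comm]

lemma cAdj_iff_eq_crossNeighbor {u v : (Fin n → Bool) × (Fin n → Bool)} :
    CAdj n u v ↔ v = crossNeighbor n u := by
  rcases u with ⟨a, b⟩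
  rcases v with ⟨c, d⟩
  simp only [CAdj, crossNeighbor, Prod.mk.injEq]
  by_cases hab : a = b <;> by_cases hcd : c = d <;> subst_vars <;> grind [bcomp_bcomp]

lemma crossNeighbor_fst_ne (hn : 0 < n) (x t : Fin n → Bool) : (crossNeighbor n (x, t)).1 ≠ x := by
  unfold crossNeighbor
  split_ifs with hxt
  · exact bcomp_ne_self hn x
  · exact Ne.symm hxt

lemma hcn_adj_iff (hn : 0 < n) {u v : (Fin n → Bool) × (Fin n → Bool)} :
    (HCN n).Adj u v ↔ (u.1 = v.1 ∧ (Qn n).Adj u.2 v.2) ∨ v = crossNeighbor n u := by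
  show u ≠ v ∧ _ ↔ _
  rw [cAdj_iff_eq_crossNeighbor]
  refine ⟨And.right, fun hadj => ⟨?_, hadj⟩⟩
  rintro rfl
  rcases hadj with ⟨-, hq⟩ | hc
  · exact (Qn n).loopless.irrefl _ hq
  · exact crossNeighbor_fst_ne hn u.1 u.2 (congrArg Prod.fst hc).symm

lemma hcn_vertexBoundary_slice (hn : 0 < n) (x : Fin n → Bool) (T : Finset (Fin n → Bool)) :
    (HCN n).vertexBoundary ({x} ×ˢ T) =
      {x} ×ˢ (Qn n).vertexBoundary T ∪ T.image fun t => crossNeighbor n (x, t) := by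
  ext ⟨y, z⟩
  simp only [mem_vertexBoundary, mem_union, mem_product, mem_singleton, mem_image, Prod.exists,
    hcn_adj_iff hn]
  constructor
  · rintro ⟨hv, _, t, ⟨rfl, ht⟩, ⟨rfl, hadj⟩ | hc⟩
    · exact Or.inl ⟨rfl, fun hz => hv ⟨rfl, hz⟩, t, ht, hadj⟩
    · exact Or.inr ⟨t, ht, hc.symm⟩
  · rintro (⟨rfl, hz, t, ht, hadj⟩ | ⟨t, ht, hc⟩)
    · exact ⟨fun h => hz h.2, y, t, ⟨rfl, ht⟩, Or.inl ⟨rfl, hadj⟩⟩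
    · exact ⟨fun h => crossNeighbor_fst_ne hn x t (by rw [hc]; exact h.1), x, t, ⟨rfl, ht⟩,
        Or.inr hc.symm⟩

lemma card_hcn_vertexBoundary_slice (hn : 0 < n) (x : Fin n → Bool) (T : Finset (Fin n → Bool)) :
    #((HCN n).vertexBoundary ({x} ×ˢ T)) = #((Qn n).vertexBoundary T) + #T := by
  have hinj : Injective fun t => crossNeighbor n (x, t) :=
    crossNeighbor_involutive.injective.comp (Prod.mk_right_injective x)
  rw [hcn_vertexBoundary_slice hn, card_union_of_disjoint, card_product, card_singleton, one_mul,
    card_image_of_injective _ hinj]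
  refine disjoint_left.mpr fun v hv hv' => ?_
  obtain ⟨t, -, rfl⟩ := mem_image.mp hv'
  exact crossNeighbor_fst_ne hn x t (mem_singleton.mp (mem_product.mp hv).1)

open scoped Classical in
/-- For the subcube slice X = {(x,y) : last n-h coordinates of y are 0}, the
neighborhood S of X in HCN_n has exactly 2^h (n+1-h) vertices. -/
theorem stmt13 (n h : ℕ) (hn : 2 ≤ n) (hh : h ≤ n - 1) (x : Fin n → Bool) :
    letI X : Finset ((Fin n → Bool) × (Fin n → Bool)) :=
      Finset.univ.filter (fun v => v.1 = x ∧ ∀ i : Fin n, h ≤ (i : ℕ) → v.2 i = false)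
    (Finset.univ.filter
      (fun v => v ∉ X ∧ ∃ u ∈ X, (HCN n).Adj u v)).card = 2 ^ h * (n + 1 - h) := by
  calc _ = #((HCN n).vertexBoundary ({x} ×ˢ lowSubcube n h)) := by
        congr 1
        ext
        simp only [mem_filter, mem_univ, true_and, mem_vertexBoundary, mem_product, mem_singleton,
          mem_lowSubcube]
    _ = 2 ^ h * (n - h) + 2 ^ h := by
        rw [card_hcn_vertexBoundary_slice (by omega), card_qn_vertexBoundary_lowSubcube,
          card_lowSubcube (by omega)]
    _ = 2 ^ h * (n + 1 - h) := by
        rw [show n + 1 - h = n - h + 1 by omega, mul_add_one]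
end
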